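/- Let (I, e, N, ᾱ, d) be a fusion algebra datum with polynomial growth of order s₀ with respect to a proper length function ℓ. Then there exist constants C > 0 and s > 0 such that for all finitely supported f, ξ : I → ℂ one has ‖f · ξ‖₂ ≤ C·‖f‖_{2,s}·‖ξ‖₂, where (f · ξ)(γ) := ∑_{α,β} f(α)·ξ(β)·N_{α,β}^γ, ‖ξ‖₂ := (∑_γ |ξ(γ)|²·d(γ)²)^{1/2}, and ‖f‖_{2,s} := (∑_α |f(α)|²·d(α)²·(1+ℓ(α))^{2s})^{1/2}. -/

import Mathlib

/-- A fusion algebra datum on an index set `I`: a unit `e`, structure constants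
`N`, a conjugation `bar`, and a dimension function `d`, satisfying finiteness
of fusion, the unit rules, Frobenius reciprocity and multiplicativity of `d`. -/
structure FusionData (I : Type*) where
  e : I
  N : I → I → I → ℕ
  bar : I → I
  d : I → ℝ
  N_fin : ∀ α β, (Function.support (N α β)).Finite
  bar_bar : ∀ α, bar (bar α) = α
  bar_e : bar e = e
  one_le_d : ∀ α, 1 ≤ d α
  d_bar : ∀ α, d (bar α) = d α
  N_unit_right : ∀ α, N α e α = 1
  N_unit_right' : ∀ α γ, γ ≠ α → N α e γ = 0
  N_unit_left : ∀ α, N e α α = 1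
  N_unit_left' : ∀ α γ, γ ≠ α → N e α γ = 0
  frob₁ : ∀ α β γ, N α β γ = N (bar α) γ β
  frob₂ : ∀ α β γ, N α β γ = N γ (bar β) α
  d_mul : ∀ α β, d α * d β = ∑ᶠ γ, (N α β γ : ℝ) * d γ

/-- A length function on a fusion algebra datum. -/
structure IsLength {I : Type*} (F : FusionData I) (ℓ : I → ℝ) : Prop where
  nonneg : ∀ α, 0 ≤ ℓ α
  map_e : ℓ F.e = 0
  map_bar : ∀ α, ℓ (F.bar α) = ℓ α
  subadd : ∀ α β γ, F.N α β γ ≠ 0 → ℓ γ ≤ ℓ α + ℓ β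

/-- A length function is proper if balls are finite and only `e` has length 0. -/
def IsProperLength {I : Type*} (F : FusionData I) (ℓ : I → ℝ) : Prop :=
  (∀ R : ℝ, 0 ≤ R → {α : I | ℓ α ≤ R}.Finite) ∧ ∀ α, ℓ α = 0 → α = F.e

/-- The fusion product `(f · ξ)(γ) = ∑_{α,β} f(α) ξ(β) N_{α,β}^γ`. -/
noncomputable def fmul {I : Type*} (F : FusionData I) (f ξ : I → ℂ) : I → ℂ :=
  fun γ => ∑ᶠ α, ∑ᶠ β, f α * ξ β * (F.N α β γ : ℂ)

/-- The weighted `ℓ²`-norm `‖ξ‖₂ = (∑_γ |ξ(γ)|² d(γ)²)^{1/2}`. -/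
noncomputable def norm2 {I : Type*} (F : FusionData I) (ξ : I → ℂ) : ℝ :=
  Real.sqrt (∑ᶠ γ, ‖ξ γ‖ ^ 2 * F.d γ ^ 2)


/-- The weighted norm `‖f‖_{2,s} = (∑_α |f(α)|² d(α)² (1+ℓ(α))^{2s})^{1/2}`. -/
noncomputable def norm2s {I : Type*} (F : FusionData I) (ℓ : I → ℝ) (s : ℝ)
    (f : I → ℂ) : ℝ :=
  Real.sqrt (∑ᶠ α, ‖f α‖ ^ 2 * F.d α ^ 2 * (1 + ℓ α) ^ (2 * s))

/-! Bound `|f · ξ|` pointwise by `∑_α |f(α)| (δ_α · |ξ|)`. Cauchy–Schwarz together with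
`∑_β N_{α,β}^γ d(β) ≤ d(α) d(γ)` and `∑_γ N_{α,β}^γ d(γ)³ ≤ (d(α) d(β))³` shows that fusion
with `δ_α` has norm at most `d(α)²` for `‖·‖₂`, hence `‖f · ξ‖₂ ≤ (∑_α |f(α)| d(α)²) ‖ξ‖₂`.
Polynomial growth of order `s₀` gives `∑_α d(α)² (1 + ℓ(α))^{-(s₀+2)} ≤ 1 + 2c`, summing shell
by shell against `∑ 1/n² ≤ 2`, and a last Cauchy–Schwarz bounds `∑_α |f(α)| d(α)²` by
`√(1 + 2c) ‖f‖_{2,s}` with `s = (s₀ + 2)/2`. -/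

open Finset Function

lemma finsum_le_of_forall_sum_le {ι : Type*} {g : ι → ℝ} {M : ℝ} (hM : 0 ≤ M)
    (h : ∀ T : Finset ι, ∑ i ∈ T, g i ≤ M) : ∑ᶠ i, g i ≤ M := by
  by_cases hg : (support g).Finite
  · rw [finsum_eq_sum_of_support_subset g hg.coe_toFinset.ge]
    exact h _
  · rwa [finsum_of_infinite_support hg]

lemma Finset.sq_sum_mul_le_sum_mul_mul_sum_mul_sq_div {ι : Type*} (s : Finset ι)
    {w q : ι → ℝ} (a : ι → ℝ) (hw : ∀ i ∈ s, 0 ≤ w i) (hq : ∀ i ∈ s, 0 < q i) :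
    (∑ i ∈ s, w i * a i) ^ 2 ≤ (∑ i ∈ s, w i * q i) * ∑ i ∈ s, w i * a i ^ 2 / q i := by
  refine sum_sq_le_sum_mul_sum_of_sq_le_mul s (fun i hi => mul_nonneg (hw i hi) (hq i hi).le)
    (fun i hi => div_nonneg (mul_nonneg (hw i hi) (sq_nonneg _)) (hq i hi).le) fun i hi => ?_
  rw [mul_pow]
  exact le_of_eq (by field_simp [(hq i hi).ne'])

lemma Finset.sum_mul_sq_sum_mul_le {ι κ : Type*} (A : Finset ι) (T : Finset κ) {a q : ι → ℝ}
    {w : κ → ℝ} (x : ι → κ → ℝ) {M : ℝ} (ha : ∀ i ∈ A, 0 ≤ a i) (hq : ∀ i ∈ A, 0 < q i)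
    (hw : ∀ k ∈ T, 0 ≤ w k) (hx : ∀ i ∈ A, ∑ k ∈ T, x i k ^ 2 * w k ≤ q i ^ 2 * M) :
    ∑ k ∈ T, (∑ i ∈ A, a i * x i k) ^ 2 * w k ≤ (∑ i ∈ A, a i * q i) ^ 2 * M := by
  have haq : 0 ≤ ∑ i ∈ A, a i * q i := sum_nonneg fun i hi => mul_nonneg (ha i hi) (hq i hi).le
  calc ∑ k ∈ T, (∑ i ∈ A, a i * x i k) ^ 2 * w k
      ≤ ∑ k ∈ T, (∑ i ∈ A, a i * q i) * (∑ i ∈ A, a i * x i k ^ 2 / q i) * w k :=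
        sum_le_sum fun k hk => mul_le_mul_of_nonneg_right
          (A.sq_sum_mul_le_sum_mul_mul_sum_mul_sq_div _ ha hq) (hw k hk)
    _ = (∑ i ∈ A, a i * q i) * ∑ i ∈ A, a i / q i * ∑ k ∈ T, x i k ^ 2 * w k := by
        simp only [mul_assoc, ← mul_sum]
        congr 1
        simp_rw [sum_mul, mul_sum]
        rw [sum_comm]
        exact sum_congr rfl fun i _ => sum_congr rfl fun k _ => by ring
    _ ≤ (∑ i ∈ A, a i * q i) * ∑ i ∈ A, a i / q i * (q i ^ 2 * M) := by
        gcongr with i hi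
        · exact div_nonneg (ha i hi) (hq i hi).le
        · exact hx i hi
    _ = (∑ i ∈ A, a i * q i) ^ 2 * M := by
        rw [sq, mul_assoc, sum_mul _ _ M]
        congr 1
        refine sum_congr rfl fun i hi => ?_
        field_simp [(hq i hi).ne']

namespace FusionData

variable {I : Type*} (F : FusionData I)

lemma d_pos (α : I) : 0 < F.d α := one_pos.trans_le (F.one_le_d α)

lemma d_e : F.d F.e = 1 := by
  have h := F.d_mul F.e F.e
  rwa [finsum_eq_single _ F.e fun γ hγ => by simp [F.N_unit_left' F.e γ hγ], F.N_unit_left,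
    Nat.cast_one, one_mul, mul_eq_left₀ (F.d_pos _).ne'] at h

lemma sum_N_mul_d_le (α β : I) (T : Finset I) :
    ∑ γ ∈ T, (F.N α β γ : ℝ) * F.d γ ≤ F.d α * F.d β := by
  classical
  have hfin : (support fun γ => (F.N α β γ : ℝ) * F.d γ).Finite :=
    (F.N_fin α β).subset fun γ hγ h => hγ (by simp [h])
  rw [F.d_mul, finsum_eq_sum_of_support_subset _ (s := T ∪ hfin.toFinset) (by simp)]
  exact sum_le_sum_of_subset_of_nonneg subset_union_left fun γ _ _ =>
    mul_nonneg (Nat.cast_nonneg _) (F.d_pos γ).le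

lemma d_le_mul_of_N_ne_zero {α β γ : I} (h : F.N α β γ ≠ 0) : F.d γ ≤ F.d α * F.d β := by
  have hN : (1 : ℝ) ≤ F.N α β γ := mod_cast Nat.one_le_iff_ne_zero.2 h
  have := F.sum_N_mul_d_le α β {γ}
  rw [sum_singleton] at this
  nlinarith [F.d_pos γ]

lemma sum_N_mul_d_left_le (α γ : I) (T : Finset I) :
    ∑ β ∈ T, (F.N α β γ : ℝ) * F.d β ≤ F.d α * F.d γ := by
  simpa only [← F.frob₁, F.d_bar] using F.sum_N_mul_d_le (F.bar α) γ T

lemma sum_N_mul_d_pow_three_le (α β : I) (T : Finset I) :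
    ∑ γ ∈ T, (F.N α β γ : ℝ) * F.d γ ^ 3 ≤ (F.d α * F.d β) ^ 3 := by
  calc ∑ γ ∈ T, (F.N α β γ : ℝ) * F.d γ ^ 3
      ≤ ∑ γ ∈ T, (F.N α β γ : ℝ) * F.d γ * (F.d α * F.d β) ^ 2 := by
        refine sum_le_sum fun γ _ => ?_
        rcases eq_or_ne (F.N α β γ) 0 with h | h
        · simp [h]
        · have := F.d_le_mul_of_N_ne_zero h
          have := F.d_pos γ
          rw [pow_succ, mul_comm _ (F.d γ), ← mul_assoc]
          gcongr
    _ ≤ (F.d α * F.d β) * (F.d α * F.d β) ^ 2 := by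
        rw [← sum_mul]
        gcongr
        exact F.sum_N_mul_d_le α β T
    _ = (F.d α * F.d β) ^ 3 := by ring

lemma sum_sq_sum_N_mul_mul_d_sq_le (α : I) (g : I → ℝ) (B T : Finset I) :
    ∑ γ ∈ T, (∑ β ∈ B, (F.N α β γ : ℝ) * g β) ^ 2 * F.d γ ^ 2 ≤
      (F.d α ^ 2) ^ 2 * ∑ β ∈ B, g β ^ 2 * F.d β ^ 2 := by
  have hpt : ∀ γ, (∑ β ∈ B, (F.N α β γ : ℝ) * g β) ^ 2 ≤
      F.d α * F.d γ * ∑ β ∈ B, (F.N α β γ : ℝ) * g β ^ 2 / F.d β := fun γ =>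
    (B.sq_sum_mul_le_sum_mul_mul_sum_mul_sq_div g (fun _ _ => Nat.cast_nonneg _)
      fun β _ => F.d_pos β).trans <| mul_le_mul_of_nonneg_right (F.sum_N_mul_d_left_le α γ B) <|
        sum_nonneg fun β _ => div_nonneg (by positivity) (F.d_pos β).le
  calc ∑ γ ∈ T, (∑ β ∈ B, (F.N α β γ : ℝ) * g β) ^ 2 * F.d γ ^ 2
      ≤ ∑ γ ∈ T, F.d α * F.d γ * (∑ β ∈ B, (F.N α β γ : ℝ) * g β ^ 2 / F.d β) * F.d γ ^ 2 :=
        sum_le_sum fun γ _ => mul_le_mul_of_nonneg_right (hpt γ) (sq_nonneg _)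
    _ = F.d α * ∑ β ∈ B, g β ^ 2 / F.d β * ∑ γ ∈ T, (F.N α β γ : ℝ) * F.d γ ^ 3 := by
        simp_rw [mul_sum, sum_mul]
        rw [sum_comm]
        exact sum_congr rfl fun β _ => sum_congr rfl fun γ _ => by ring
    _ ≤ F.d α * ∑ β ∈ B, g β ^ 2 / F.d β * (F.d α * F.d β) ^ 3 := by
        have := F.d_pos α
        gcongr with β
        · exact div_nonneg (sq_nonneg _) (F.d_pos β).le
        · exact F.sum_N_mul_d_pow_three_le α β T
    _ = (F.d α ^ 2) ^ 2 * ∑ β ∈ B, g β ^ 2 * F.d β ^ 2 := by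
        rw [mul_sum, mul_sum]
        refine sum_congr rfl fun β _ => ?_
        field_simp [(F.d_pos β).ne']

variable {F} {f ξ : I → ℂ} {A B : Finset I}

lemma fmul_eq_sum (hA : support f ⊆ A) (hB : support ξ ⊆ B) (γ : I) :
    fmul F f ξ γ = ∑ α ∈ A, ∑ β ∈ B, f α * ξ β * F.N α β γ := by
  rw [fmul, finsum_eq_sum_of_support_subset _ (support_subset_iff'.2 fun α hα => ?_)]
  · exact sum_congr rfl fun α _ => finsum_eq_sum_of_support_subset _ <|
      support_subset_iff'.2 fun β hβ => by simp [support_subset_iff'.1 hB β hβ]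
  · simp [support_subset_iff'.1 hA α hα]

lemma norm_fmul_le (hA : support f ⊆ A) (hB : support ξ ⊆ B) (γ : I) :
    ‖fmul F f ξ γ‖ ≤ ∑ α ∈ A, ‖f α‖ * ∑ β ∈ B, (F.N α β γ : ℝ) * ‖ξ β‖ := by
  rw [fmul_eq_sum hA hB]
  refine (norm_sum_le _ _).trans <| sum_le_sum fun α _ => (norm_sum_le _ _).trans_eq ?_
  simp only [mul_sum, norm_mul, Complex.norm_natCast]
  exact sum_congr rfl fun β _ => by ring

lemma sum_norm_fmul_sq_mul_d_sq_le (hA : support f ⊆ A) (hB : support ξ ⊆ B) (T : Finset I) :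
    ∑ γ ∈ T, ‖fmul F f ξ γ‖ ^ 2 * F.d γ ^ 2 ≤
      (∑ α ∈ A, ‖f α‖ * F.d α ^ 2) ^ 2 * ∑ β ∈ B, ‖ξ β‖ ^ 2 * F.d β ^ 2 := by
  refine le_trans (sum_le_sum fun γ _ => ?_) <| A.sum_mul_sq_sum_mul_le T
    (fun α γ => ∑ β ∈ B, (F.N α β γ : ℝ) * ‖ξ β‖) (fun α _ => norm_nonneg _)
    (fun α _ => pow_pos (F.d_pos α) 2) (fun γ _ => sq_nonneg _)
    fun α _ => F.sum_sq_sum_N_mul_mul_d_sq_le α (‖ξ ·‖) B T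
  gcongr
  exact norm_fmul_le hA hB γ

lemma norm2_fmul_le (hA : support f ⊆ A) (hξ : (support ξ).Finite) :
    norm2 F (fmul F f ξ) ≤ (∑ α ∈ A, ‖f α‖ * F.d α ^ 2) * norm2 F ξ := by
  have hL : 0 ≤ ∑ α ∈ A, ‖f α‖ * F.d α ^ 2 := sum_nonneg fun _ _ => by positivity
  rw [norm2, norm2, ← Real.sqrt_sq hL, ← Real.sqrt_mul (sq_nonneg _),
    finsum_eq_sum_of_support_subset (fun β => ‖ξ β‖ ^ 2 * F.d β ^ 2) (s := hξ.toFinset)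
      (support_subset_iff'.2 fun β hβ => ?_)]
  · exact Real.sqrt_le_sqrt <| finsum_le_of_forall_sum_le (by positivity)
      (sum_norm_fmul_sq_mul_d_sq_le hA hξ.coe_toFinset.ge)
  · simp [support_subset_iff'.1 hξ.coe_toFinset.ge β hβ]

def HasPolyGrowth (F : FusionData I) (ℓ : I → ℝ) (s₀ c : ℝ) : Prop :=
  ∀ n : ℕ, 1 ≤ n →
    ∑ᶠ α ∈ {α : I | (n : ℝ) - 1 < ℓ α ∧ ℓ α ≤ n}, F.d α ^ 2 ≤ c * (n : ℝ) ^ s₀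

variable {ℓ : I → ℝ} {s₀ c : ℝ}

lemma HasPolyGrowth.sum_filter_ceil_eq_d_sq_le (hgrow : F.HasPolyGrowth ℓ s₀ c)
    (hproper : IsProperLength F ℓ) {n : ℕ} (hn : 1 ≤ n) (A : Finset I) :
    ∑ α ∈ A with ⌈ℓ α⌉₊ = n, F.d α ^ 2 ≤ c * (n : ℝ) ^ s₀ := by
  have hshell : {α : I | (n : ℝ) - 1 < ℓ α ∧ ℓ α ≤ n}.Finite :=
    (hproper.1 n n.cast_nonneg).subset fun α h => h.2
  refine le_trans ?_ (hgrow n hn)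
  rw [finsum_mem_eq_finite_toFinset_sum _ hshell]
  refine sum_le_sum_of_subset_of_nonneg (fun α hα => ?_) fun α _ _ => sq_nonneg _
  obtain ⟨hlt, hle⟩ := (Nat.ceil_eq_iff (by omega)).1 (mem_filter.1 hα).2
  rw [Nat.cast_sub hn, Nat.cast_one] at hlt
  simpa using ⟨hlt, hle⟩

lemma HasPolyGrowth.sum_filter_ceil_eq_d_sq_mul_rpow_le (hgrow : F.HasPolyGrowth ℓ s₀ c)
    (hℓ : IsLength F ℓ) (hproper : IsProperLength F ℓ) (hs₀ : -2 ≤ s₀) {n : ℕ} (hn : 1 ≤ n)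
    (A : Finset I) :
    ∑ α ∈ A with ⌈ℓ α⌉₊ = n, F.d α ^ 2 * (1 + ℓ α) ^ (-(s₀ + 2)) ≤ c * ((n : ℝ) ^ 2)⁻¹ := by
  have hn' : (0 : ℝ) < n := by exact_mod_cast hn
  calc ∑ α ∈ A with ⌈ℓ α⌉₊ = n, F.d α ^ 2 * (1 + ℓ α) ^ (-(s₀ + 2))
      ≤ ∑ α ∈ A with ⌈ℓ α⌉₊ = n, F.d α ^ 2 * (n : ℝ) ^ (-(s₀ + 2)) := by
        refine sum_le_sum fun α hα => ?_
        have hceil : (n : ℝ) ≤ 1 + ℓ α := by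
          rw [← (mem_filter.1 hα).2]
          linarith [Nat.ceil_lt_add_one (hℓ.nonneg α)]
        exact mul_le_mul_of_nonneg_left
          (Real.rpow_le_rpow_of_nonpos hn' hceil (by linarith)) (sq_nonneg _)
    _ = (∑ α ∈ A with ⌈ℓ α⌉₊ = n, F.d α ^ 2) * (n : ℝ) ^ (-(s₀ + 2)) := (sum_mul ..).symm
    _ ≤ c * (n : ℝ) ^ s₀ * (n : ℝ) ^ (-(s₀ + 2)) := by
        gcongr
        exact hgrow.sum_filter_ceil_eq_d_sq_le hproper hn A
    _ = c * ((n : ℝ) ^ 2)⁻¹ := by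
        rw [mul_assoc, ← Real.rpow_add hn', show s₀ + -(s₀ + 2) = -2 by ring,
          Real.rpow_neg hn'.le, Real.rpow_two]

lemma HasPolyGrowth.sum_d_sq_mul_rpow_le_one_add (hgrow : F.HasPolyGrowth ℓ s₀ c)
    (hℓ : IsLength F ℓ) (hproper : IsProperLength F ℓ) (hs₀ : -2 ≤ s₀) (hc : 0 ≤ c)
    (A : Finset I) :
    ∑ α ∈ A, F.d α ^ 2 * (1 + ℓ α) ^ (-(s₀ + 2)) ≤ 1 + 2 * c := by
  set M := A.sup fun α => ⌈ℓ α⌉₊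
  have hmaps : ∀ α ∈ A, ⌈ℓ α⌉₊ ∈ range (M + 1) := fun α hα =>
    mem_range_succ_iff.2 (le_sup (f := fun α => ⌈ℓ α⌉₊) hα)
  rw [← sum_fiberwise_of_maps_to hmaps, range_eq_Ico, sum_eq_sum_Ico_succ_bot (Nat.succ_pos _),
    Ico_add_one_left_eq_Ioo]
  gcongr ?_ + ?_
  · have hsub : {α ∈ A | ⌈ℓ α⌉₊ = 0} ⊆ {F.e} := fun α hα => mem_singleton.2 <|
      hproper.2 α <| le_antisymm (Nat.ceil_eq_zero.1 (mem_filter.1 hα).2) (hℓ.nonneg α)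
    calc ∑ α ∈ A with ⌈ℓ α⌉₊ = 0, F.d α ^ 2 * (1 + ℓ α) ^ (-(s₀ + 2))
        ≤ ∑ α ∈ {F.e}, F.d α ^ 2 * (1 + ℓ α) ^ (-(s₀ + 2)) :=
          sum_le_sum_of_subset_of_nonneg hsub fun α _ _ => by
            have := hℓ.nonneg α
            positivity
      _ = 1 := by simp [F.d_e, hℓ.map_e]
  · calc ∑ n ∈ Ioo 0 (M + 1),
          ∑ α ∈ A with ⌈ℓ α⌉₊ = n, F.d α ^ 2 * (1 + ℓ α) ^ (-(s₀ + 2))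
        ≤ ∑ n ∈ Ioo 0 (M + 1), c * ((n : ℝ) ^ 2)⁻¹ :=
          sum_le_sum fun n hn =>
            hgrow.sum_filter_ceil_eq_d_sq_mul_rpow_le hℓ hproper hs₀ (mem_Ioo.1 hn).1 A
      _ ≤ c * 2 := by
          rw [← mul_sum]
          gcongr
          simpa using sum_Ioo_inv_sq_le (α := ℝ) 0 (M + 1)
      _ = 2 * c := mul_comm c 2

lemma HasPolyGrowth.sum_norm_mul_d_sq_le_mul_norm2s (hgrow : F.HasPolyGrowth ℓ s₀ c)
    (hℓ : IsLength F ℓ) (hproper : IsProperLength F ℓ) (hs₀ : -2 ≤ s₀) (hc : 0 ≤ c)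
    (hf : (support f).Finite) :
    ∑ α ∈ hf.toFinset, ‖f α‖ * F.d α ^ 2 ≤ √(1 + 2 * c) * norm2s F ℓ ((s₀ + 2) / 2) f := by
  have hpos : ∀ α, 0 < 1 + ℓ α := fun α => by linarith [hℓ.nonneg α]
  rw [norm2s, show 2 * ((s₀ + 2) / 2) = s₀ + 2 by ring, ← Real.sqrt_mul (by linarith),
    finsum_eq_sum_of_support_subset _ (s := hf.toFinset) (support_subset_iff'.2 fun α hα => ?_)]
  · refine Real.le_sqrt_of_sq_le <| (sum_sq_le_sum_mul_sum_of_sq_le_mul _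
      (g := fun α => ‖f α‖ ^ 2 * F.d α ^ 2 * (1 + ℓ α) ^ (s₀ + 2))
      (fun α _ => by have := hpos α; positivity) (fun α _ => by have := hpos α; positivity)
      fun α _ => le_of_eq ?_).trans <| mul_le_mul_of_nonneg_right
        (hgrow.sum_d_sq_mul_rpow_le_one_add hℓ hproper hs₀ hc _)
        (sum_nonneg fun α _ => by have := hpos α; positivity)
    rw [Real.rpow_neg (hpos α).le]
    have := Real.rpow_pos_of_pos (hpos α) (s₀ + 2)
    field_simp
  · simp [support_subset_iff'.1 hf.coe_toFinset.ge α hα]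

end FusionData

/-- **rapid decay.** A fusion algebra datum with polynomial growth
of order `s₀` with respect to a proper length function has the rapid decay
property: there are `C, s > 0` with `‖f · ξ‖₂ ≤ C ‖f‖_{2,s} ‖ξ‖₂`. -/
theorem stmt_9 {I : Type*} (F : FusionData I) (ℓ : I → ℝ) (hℓ : IsLength F ℓ)
    (hproper : IsProperLength F ℓ)
    (s₀ c : ℝ) (hs₀ : 0 < s₀) (hc : 0 < c)
    (hgrow : ∀ n : ℕ, 1 ≤ n →
      ∑ᶠ α ∈ {α : I | (n : ℝ) - 1 < ℓ α ∧ ℓ α ≤ n}, F.d α ^ 2 ≤ c * (n : ℝ) ^ s₀) :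
    ∃ C : ℝ, 0 < C ∧ ∃ s : ℝ, 0 < s ∧
      ∀ f ξ : I → ℂ, (Function.support f).Finite → (Function.support ξ).Finite →
        norm2 F (fmul F f ξ) ≤ C * norm2s F ℓ s f * norm2 F ξ := by
  refine ⟨√(1 + 2 * c), by positivity, (s₀ + 2) / 2, by linarith, fun f ξ hf hξ => ?_⟩
  calc norm2 F (fmul F f ξ) ≤ (∑ α ∈ hf.toFinset, ‖f α‖ * F.d α ^ 2) * norm2 F ξ :=
        FusionData.norm2_fmul_le hf.coe_toFinset.ge hξ
    _ ≤ √(1 + 2 * c) * norm2s F ℓ ((s₀ + 2) / 2) f * norm2 F ξ := by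
        gcongr
        · exact Real.sqrt_nonneg _
        · exact FusionData.HasPolyGrowth.sum_norm_mul_d_sq_le_mul_norm2s hgrow hℓ hproper
            (by linarith) hc.le hf
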